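/- Let t ≥ 2 be an integer, let H be a finite simple graph, let S ⊆ V(H) with |S| ≥ |V(H)| − 3, and let G = Cl(H, S, t) be a clique attachment of H along S. Then the t-clique-free complex CF_t(G) is shellable. -/

import Mathlib

/-- The `t`-clique-free complex of a graph `G`: faces are the finite vertex sets
containing no `t`-clique of `G`. -/
def cliqueFreeComplex {V : Type*} (G : SimpleGraph V) (t : ℕ) : Set (Finset V) :=
  {A : Finset V | ∀ B ⊆ A, ¬ G.IsNClique t B}

/-- The facets (maximal faces) of a simplicial complex. -/
def Facets {V : Type*} (Δ : Set (Finset V)) : Set (Finset V) :=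
  {F | F ∈ Δ ∧ ∀ A ∈ Δ, F ⊆ A → F = A}

/-- Shellability: the facets admit a linear order `F 0, …, F (s-1)` such that for all
`i < j` there are `v ∈ F j \ F i` and `l < j` with `F j \ F l = {v}`. -/
def IsShellable {V : Type*} [DecidableEq V] (Δ : Set (Finset V)) : Prop :=
  ∃ (s : ℕ) (F : Fin s → Finset V),
    (∀ i, F i ∈ Facets Δ) ∧ Function.Injective F ∧
    (∀ A ∈ Facets Δ, ∃ i, F i = A) ∧
    ∀ i j : Fin s, i < j →
      ∃ v ∈ F j \ F i, ∃ l, l < j ∧ F j \ F l = ({v} : Finset V)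

/-- The data of a clique attachment `G = Cl(H, S, t)`: `G` is a graph on the ambient
vertex type, `VH` is the vertex set of `H` (so that `H` is the induced subgraph of `G`
on `VH`; no new edges are added between vertices of `H`), `S ⊆ VH`, and for each
`v ∈ S`, `K v` is the vertex set of the clique attached at `v`: it contains `v`, has at
least `t` vertices, its other vertices are new and pairwise disjoint from the other
attached cliques, and each new vertex is adjacent exactly to the other vertices of
its clique. -/
structure IsCliqueAttachment {V : Type*} [DecidableEq V] (G : SimpleGraph V)
    (VH S : Finset V) (K : V → Finset V) (t : ℕ) : Prop where
  subset : S ⊆ VH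
  cover : ∀ w : V, w ∈ VH ∨ ∃ v ∈ S, w ∈ K v
  mem_self : ∀ v ∈ S, v ∈ K v
  card_ge : ∀ v ∈ S, t ≤ (K v).card
  new_vertices : ∀ v ∈ S, ∀ w ∈ K v, w ≠ v → w ∉ VH
  pairwise_disjoint : ∀ u ∈ S, ∀ v ∈ S, u ≠ v → Disjoint (K u) (K v)
  clique : ∀ v ∈ S, G.IsClique ↑(K v)
  adj_new : ∀ v ∈ S, ∀ w ∈ K v, w ∉ VH → ∀ u : V, G.Adj w u ↔ (u ∈ K v ∧ u ≠ w)

/-!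
Write `T = VH \ S` and call the vertices outside `VH` new. A set `A` is a face of `CF_t(G)` iff
`A ∩ VH` is one and `A` has fewer than `t` vertices in each attached clique `K v`. Hence a facet `F`
meets every `K v` in exactly `t - 1` vertices, and no vertex of `T` can be added to `F ∩ VH`.

Order the facets lexicographically by `F ∩ S` (smaller first), `F ∩ T` (larger first) and the new
vertices (colexicographically). Given facets `Fi` before `Fj`, an earlier facet `Fl` with
`Fj \ Fl = {v}`, `v ∉ Fi`, is found as follows. If some `u ∈ Fj ∩ S` is missing from `Fi`, trade `u`
for a new vertex of `K u` and extend to a facet. Otherwise `Fi ∩ S = Fj ∩ S`. If the `T`-parts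
differ, take `Fl = (Fi ∩ VH) ∪ (Fj \ VH)`; since `|T| ≤ 3`, the `T`-part of `Fj` has exactly one
vertex outside `Fi`. If they agree, trade the colex-largest new vertex of `Fj \ Fi` for a smaller
vertex of `Fi \ Fj` in the same clique.
-/

open Finset Function OrderDual

section Facets

variable {V : Type*} {Δ : Set (Finset V)}

lemma insert_notMem_of_mem_facets [DecidableEq V] {F : Finset V} (hF : F ∈ Facets Δ) {x : V}
    (hx : x ∉ F) : insert x F ∉ Δ :=
  fun h => hx (hF.2 _ h (subset_insert x F) ▸ mem_insert_self x F)

lemma exists_mem_facets_superset [Finite V] {A : Finset V} (hA : A ∈ Δ) :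
    ∃ F ∈ Facets Δ, A ⊆ F := by
  obtain ⟨F, hAF, hF⟩ := Finite.exists_le_maximal (p := (· ∈ Δ)) hA
  exact ⟨F, ⟨hF.prop, fun B hB hFB => le_antisymm hFB (hF.2 hB hFB)⟩, hAF⟩

theorem isShellable_of_exists_exchange [DecidableEq V] {β : Type*} [LinearOrder β]
    (hfin : (Facets Δ).Finite) (key : Finset V → β) (hkey : (Facets Δ).InjOn key)
    (hex : ∀ F ∈ Facets Δ, ∀ F' ∈ Facets Δ, key F < key F' →
      ∃ v ∈ F' \ F, ∃ F'' ∈ Facets Δ, key F'' < key F' ∧ F' \ F'' = {v}) :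
    IsShellable Δ := by
  set keys := hfin.toFinset.image key
  set e := keys.orderEmbOfFin rfl
  set F : Fin #keys → Finset V := fun i => invFunOn key (Facets Δ) (e i)
  have hF : ∀ i, F i ∈ Facets Δ ∧ key (F i) = e i := by
    intro i
    have hi := keys.orderEmbOfFin_mem rfl i
    simp only [keys, mem_image, Set.Finite.mem_toFinset] at hi
    exact invFunOn_pos hi
  have hsurj : ∀ A ∈ Facets Δ, ∃ i, F i = A := by
    intro A hA
    obtain ⟨i, hi⟩ : key A ∈ Set.range e := by
      rw [range_orderEmbOfFin]
      simpa [keys] using ⟨A, hA, rfl⟩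
    exact ⟨i, hkey (hF i).1 hA ((hF i).2.trans hi)⟩
  refine ⟨#keys, F, fun i => (hF i).1, fun i j h => e.injective ?_, hsurj, fun i j hij => ?_⟩
  · rw [← (hF i).2, ← (hF j).2, h]
  · have hlt : key (F i) < key (F j) := by
      rw [(hF i).2, (hF j).2]
      exact e.strictMono hij
    obtain ⟨v, hv, F'', hF'', hlt', hdiff⟩ := hex _ (hF i).1 _ (hF j).1 hlt
    obtain ⟨l, rfl⟩ := hsurj F'' hF''
    refine ⟨v, hv, l, ?_, hdiff⟩
    rwa [(hF l).2, (hF j).2, e.lt_iff_lt] at hlt'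

end Facets

namespace Finset

variable {V : Type*} [DecidableEq V]

lemma sdiff_insert_erase_eq_singleton {s : Finset V} {a m : V}
    (hm : m ∈ s) (ham : a ≠ m) : s \ insert a (s.erase m) = {m} := by
  ext z
  simp only [mem_sdiff, mem_insert, mem_erase, mem_singleton]
  constructor
  · rintro ⟨hz, hz'⟩
    by_contra hzm
    exact hz' (Or.inr ⟨hzm, hz⟩)
  · rintro rfl
    exact ⟨hm, by rintro (h | ⟨h, -⟩) <;> [exact ham h.symm; exact h rfl]⟩

lemma mem_iff_mem_of_inter_eq {s t u : Finset V} (h : s ∩ u = t ∩ u)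
    {z : V} (hz : z ∈ u) : z ∈ s ↔ z ∈ t := by
  simpa [hz] using Finset.ext_iff.mp h z

lemma inter_eq_inter_of_subset {s t u w : Finset V}
    (h : s ∩ u = t ∩ u) (hw : w ⊆ u) : s ∩ w = t ∩ w := by
  rw [← inter_eq_right.mpr hw, ← inter_assoc, ← inter_assoc, h]

end Finset

lemma mem_cliqueFreeComplex_of_subset {V : Type*} {G : SimpleGraph V} {t : ℕ} {A B : Finset V}
    (hA : A ∈ cliqueFreeComplex G t) (hBA : B ⊆ A) : B ∈ cliqueFreeComplex G t :=
  fun C hC => hA C (hC.trans hBA)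

section CardColex

variable {V : Type*} {A B : Finset V}

def cardColex (A : Finset V) : ℕ ×ₗ Colex (Finset V) := toLex (#A, toColex A)

lemma cardColex_injective : Injective (cardColex (V := V)) :=
  fun _ _ h => toColex_inj.mp (congrArg (fun p => (ofLex p).2) h)

lemma cardColex_lt_of_ssubset [PartialOrder V] (h : A ⊂ B) : cardColex A < cardColex B :=
  Prod.Lex.toLex_lt_toLex.mpr (Or.inl (card_lt_card h))

lemma card_le_of_cardColex_le [PartialOrder V] (h : cardColex A ≤ cardColex B) : #A ≤ #B :=
  (Prod.Lex.toLex_le_toLex'.mp h).1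

end CardColex

def shellingKey {V : Type*} [DecidableEq V] (VH S F : Finset V) :
    (ℕ ×ₗ Colex (Finset V)) ×ₗ (ℕ ×ₗ Colex (Finset V))ᵒᵈ ×ₗ Colex (Finset V) :=
  toLex (cardColex (F ∩ S), toLex (toDual (cardColex (F ∩ (VH \ S))), toColex (F \ VH)))

lemma shellingKey_injective {V : Type*} [DecidableEq V] (VH S : Finset V) :
    Injective (shellingKey VH S) := by
  intro F F' h
  simp only [shellingKey, toLex_inj, Prod.mk.injEq, cardColex_injective.eq_iff, toDual_inj,
    toColex_inj] at h
  have hdecomp : ∀ F : Finset V, F = F ∩ S ∪ F ∩ (VH \ S) ∪ F \ VH := fun F => by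
    ext z
    simp only [mem_union, mem_inter, mem_sdiff]
    tauto
  rw [hdecomp F, hdecomp F', h.1, h.2.1, h.2.2]

namespace IsCliqueAttachment

variable {V : Type*} [DecidableEq V] {G : SimpleGraph V} {VH S : Finset V} {K : V → Finset V}
  {t : ℕ} {F F' Fi Fj : Finset V}

lemma mem_K_iff_of_mem_VH (hG : IsCliqueAttachment G VH S K t) {x v : V} (hx : x ∈ VH)
    (hv : v ∈ S) : x ∈ K v ↔ x = v :=
  ⟨fun hxK => by_contra fun hne => hG.new_vertices v hv x hxK hne hx,
    fun h => h ▸ hG.mem_self v hv⟩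

lemma notMem_K_of_mem_K (hG : IsCliqueAttachment G VH S K t) {w u v : V} (hu : u ∈ S)
    (hv : v ∈ S) (huv : u ≠ v) (hw : w ∈ K u) : w ∉ K v :=
  disjoint_left.mp (hG.pairwise_disjoint u hu v hv huv) hw

lemma inter_VH_eq_union (hG : IsCliqueAttachment G VH S K t) (F : Finset V) :
    F ∩ VH = F ∩ S ∪ F ∩ (VH \ S) := by
  rw [← inter_union_distrib_left, union_sdiff_of_subset hG.subset]

lemma exists_subset_K_of_isNClique (hG : IsCliqueAttachment G VH S K t) {B : Finset V}
    (hB : G.IsNClique t B) {w : V} (hw : w ∈ B) (hwVH : w ∉ VH) : ∃ v ∈ S, B ⊆ K v := by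
  obtain ⟨v, hv, hwK⟩ := (hG.cover w).resolve_left hwVH
  refine ⟨v, hv, fun u hu => ?_⟩
  obtain rfl | hne := eq_or_ne u w
  · exact hwK
  · exact ((hG.adj_new v hv w hwK hwVH u).mp (hB.1 hw hu hne.symm)).1

lemma mem_cliqueFreeComplex_iff (hG : IsCliqueAttachment G VH S K t) {A : Finset V} :
    A ∈ cliqueFreeComplex G t ↔
      A ∩ VH ∈ cliqueFreeComplex G t ∧ ∀ v ∈ S, #(A ∩ K v) < t := by
  refine ⟨fun hA => ⟨mem_cliqueFreeComplex_of_subset hA inter_subset_left, fun v hv => ?_⟩,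
    fun ⟨hVH, hK⟩ B hBA hB => ?_⟩
  · by_contra! hle
    obtain ⟨B, hBA, hBcard⟩ := exists_subset_card_eq hle
    refine hA B (hBA.trans inter_subset_left) ⟨?_, hBcard⟩
    exact (hG.clique v hv).subset (coe_subset.mpr (hBA.trans inter_subset_right))
  · by_cases hBVH : B ⊆ VH
    · exact hVH B (subset_inter hBA hBVH) hB
    · obtain ⟨w, hwB, hwVH⟩ := not_subset.mp hBVH
      obtain ⟨v, hv, hBK⟩ := hG.exists_subset_K_of_isNClique hB hwB hwVH
      have := card_le_card (subset_inter hBA hBK)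
      have := hK v hv
      have := hB.2
      omega

lemma card_inter_K_add_one_eq (hG : IsCliqueAttachment G VH S K t)
    (hF : F ∈ Facets (cliqueFreeComplex G t)) {v : V} (hv : v ∈ S) : #(F ∩ K v) + 1 = t := by
  have hface := hG.mem_cliqueFreeComplex_iff.mp hF.1
  have hlt := hface.2 v hv
  by_contra hne
  obtain ⟨w, hwK, hwF⟩ : ∃ w ∈ (K v).erase v, w ∉ F := by
    by_contra! hsub
    have := card_le_card (fun x hx => mem_inter.mpr ⟨hsub x hx, mem_of_mem_erase hx⟩ :
      (K v).erase v ⊆ F ∩ K v)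
    have := card_erase_add_one (hG.mem_self v hv)
    have := hG.card_ge v hv
    omega
  have hwVH := hG.new_vertices v hv w (mem_of_mem_erase hwK) (ne_of_mem_erase hwK)
  refine insert_notMem_of_mem_facets hF hwF (hG.mem_cliqueFreeComplex_iff.mpr ⟨?_, ?_⟩)
  · rw [insert_inter_of_notMem hwVH]
    exact hface.1
  · intro u hu
    obtain rfl | huv := eq_or_ne u v
    · rw [insert_inter_of_mem (mem_of_mem_erase hwK), card_insert_of_notMem (by simp [hwF])]
      omega
    · rw [insert_inter_of_notMem (hG.notMem_K_of_mem_K hv hu huv.symm (mem_of_mem_erase hwK))]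
      exact hface.2 u hu

lemma mem_facets_iff (hG : IsCliqueAttachment G VH S K t) :
    F ∈ Facets (cliqueFreeComplex G t) ↔
      F ∩ VH ∈ cliqueFreeComplex G t ∧ (∀ v ∈ S, #(F ∩ K v) + 1 = t) ∧
        ∀ x ∈ VH \ S, x ∉ F → insert x (F ∩ VH) ∉ cliqueFreeComplex G t := by
  constructor
  · intro hF
    refine ⟨(hG.mem_cliqueFreeComplex_iff.mp hF.1).1,
      fun v hv => hG.card_inter_K_add_one_eq hF hv, fun x hx hxF hins => ?_⟩
    obtain ⟨hxVH, hxS⟩ := mem_sdiff.mp hx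
    refine insert_notMem_of_mem_facets hF hxF (hG.mem_cliqueFreeComplex_iff.mpr ⟨?_, ?_⟩)
    · rwa [insert_inter_of_mem hxVH]
    · intro v hv
      have hxK : x ∉ K v := fun h => hxS ((hG.mem_K_iff_of_mem_VH hxVH hv).mp h ▸ hv)
      rw [insert_inter_of_notMem hxK]
      exact (hG.mem_cliqueFreeComplex_iff.mp hF.1).2 v hv
  · rintro ⟨hVH, hK, hmax⟩
    refine ⟨hG.mem_cliqueFreeComplex_iff.mpr ⟨hVH, fun v hv => by have := hK v hv; omega⟩,
      fun A hA hFA => ?_⟩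
    by_contra hne
    obtain ⟨y, hyA, hyF⟩ := exists_of_ssubset (hFA.ssubset_of_ne hne)
    have hyΔ := mem_cliqueFreeComplex_of_subset hA (insert_subset hyA hFA)
    by_cases hy : ∃ v ∈ S, y ∈ K v
    · obtain ⟨v, hv, hyK⟩ := hy
      have := (hG.mem_cliqueFreeComplex_iff.mp hyΔ).2 v hv
      rw [insert_inter_of_mem hyK, card_insert_of_notMem (by simp [hyF])] at this
      have := hK v hv
      omega
    · have hyVH := (hG.cover y).resolve_right hy
      have hyS : y ∉ S := fun h => hy ⟨y, h, hG.mem_self y h⟩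
      refine hmax y (mem_sdiff.mpr ⟨hyVH, hyS⟩) hyF ?_
      rw [← insert_inter_of_mem hyVH]
      exact (hG.mem_cliqueFreeComplex_iff.mp hyΔ).1

lemma mem_facets_of_inter_VH_eq (hG : IsCliqueAttachment G VH S K t)
    (hF : F ∈ Facets (cliqueFreeComplex G t)) (hVH : F' ∩ VH = F ∩ VH)
    (hK : ∀ v ∈ S, #(F' ∩ K v) + 1 = t) : F' ∈ Facets (cliqueFreeComplex G t) := by
  obtain ⟨hFVH, -, hmax⟩ := hG.mem_facets_iff.mp hF
  refine hG.mem_facets_iff.mpr ⟨hVH ▸ hFVH, hK, fun x hx hxF' => hVH ▸ hmax x hx fun hxF => ?_⟩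
  have : x ∈ F ∩ VH := mem_inter.mpr ⟨hxF, (mem_sdiff.mp hx).1⟩
  exact hxF' (mem_of_mem_inter_left (hVH ▸ this))

lemma card_insert_erase_inter_K (hG : IsCliqueAttachment G VH S K t) {a m v w : V}
    (hv : v ∈ S) (hw : w ∈ S) (ha : a ∈ K v) (haF : a ∉ F) (hm : m ∈ F ∩ K v) :
    #(insert a (F.erase m) ∩ K w) = #(F ∩ K w) := by
  obtain rfl | hwv := eq_or_ne w v
  · rw [insert_inter_of_mem ha, erase_inter, card_insert_of_notMem (by simp [haF]),
      card_erase_add_one hm]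
  · have hmK : m ∉ F ∩ K w := fun h =>
      hG.notMem_K_of_mem_K hv hw hwv.symm (mem_inter.mp hm).2 (mem_inter.mp h).2
    rw [insert_inter_of_notMem (hG.notMem_K_of_mem_K hv hw hwv.symm ha), erase_inter,
      erase_eq_of_notMem hmK]

lemma exists_mem_facets_sdiff_eq_singleton [Finite V] (hG : IsCliqueAttachment G VH S K t)
    (hF : F ∈ Facets (cliqueFreeComplex G t)) {u : V} (hu : u ∈ F) (huS : u ∈ S) :
    ∃ F' ∈ Facets (cliqueFreeComplex G t), F \ F' = {u} ∧ F' ∩ S ⊂ F ∩ S := by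
  have hFK : ∀ v ∈ S, #(F ∩ K v) + 1 = t := fun v => hG.card_inter_K_add_one_eq hF
  obtain ⟨y, hyK, hyF⟩ : ∃ y ∈ K u, y ∉ F := by
    by_contra! hsub
    have := card_le_card (subset_inter hsub subset_rfl)
    have := hG.card_ge u huS
    have := hFK u huS
    omega
  have hyu : y ≠ u := fun h => hyF (h ▸ hu)
  have hyVH := hG.new_vertices u huS y hyK hyu
  set F₀ := insert y (F.erase u)
  have hF₀K : ∀ v ∈ S, #(F₀ ∩ K v) + 1 = t := fun v hv => by
    rw [hG.card_insert_erase_inter_K huS hv hyK hyF (mem_inter.mpr ⟨hu, hG.mem_self u huS⟩)]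
    exact hFK v hv
  have hF₀ : F₀ ∈ cliqueFreeComplex G t := by
    refine hG.mem_cliqueFreeComplex_iff.mpr ⟨?_, fun v hv => by have := hF₀K v hv; omega⟩
    refine mem_cliqueFreeComplex_of_subset (hG.mem_cliqueFreeComplex_iff.mp hF.1).1 ?_
    rw [insert_inter_of_notMem hyVH, erase_inter]
    exact erase_subset _ _
  -- `F₀` already meets every attached clique in `t - 1` vertices, so any facet above it
  -- agrees with it there; in particular it avoids `u` and gains no vertex of `S`.
  obtain ⟨F', hF', hF₀F'⟩ := exists_mem_facets_superset hF₀
  have hF'S : ∀ v ∈ S, v ∈ F' → v ∈ F₀ := by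
    intro v hv hvF'
    have hK : F₀ ∩ K v = F' ∩ K v := eq_of_subset_of_card_le (inter_subset_inter hF₀F' subset_rfl)
      (by have := hF₀K v hv; have := hG.card_inter_K_add_one_eq hF' hv; omega)
    exact mem_of_mem_inter_left (hK ▸ mem_inter.mpr ⟨hvF', hG.mem_self v hv⟩)
  have huF' : u ∉ F' := fun h => by simpa [F₀, hyu.symm] using hF'S u huS h
  refine ⟨F', hF', ?_, (ssubset_iff_of_subset fun v hv => ?_).mpr ⟨u, mem_inter.mpr ⟨hu, huS⟩,
    fun h => huF' (mem_inter.mp h).1⟩⟩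
  · refine Subset.antisymm ?_ (singleton_subset_iff.mpr (mem_sdiff.mpr ⟨hu, huF'⟩))
    rw [← sdiff_insert_erase_eq_singleton hu hyu]
    exact sdiff_subset_sdiff subset_rfl hF₀F'
  · obtain ⟨hvF', hvS⟩ := mem_inter.mp hv
    have hvy : v ≠ y := fun h => hyVH (h ▸ hG.subset hvS)
    have hvF₀ := (mem_insert.mp (hF'S v hvS hvF')).resolve_left hvy
    exact mem_inter.mpr ⟨mem_of_mem_erase hvF₀, hvS⟩

lemma inter_VH_eq_of_subset (hG : IsCliqueAttachment G VH S K t)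
    (hFi : Fi ∈ cliqueFreeComplex G t) (hFj : Fj ∈ Facets (cliqueFreeComplex G t))
    (hS : Fi ∩ S = Fj ∩ S) (hsub : Fj ∩ VH ⊆ Fi ∩ VH) : Fj ∩ VH = Fi ∩ VH := by
  refine hsub.antisymm fun x hx => ?_
  obtain ⟨hxFi, hxVH⟩ := mem_inter.mp hx
  by_contra hxFj
  have hxS : x ∉ S := fun h =>
    hxFj (mem_inter.mpr ⟨(mem_iff_mem_of_inter_eq hS h).mp hxFi, hxVH⟩)
  refine (hG.mem_facets_iff.mp hFj).2.2 x (mem_sdiff.mpr ⟨hxVH, hxS⟩)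
    (fun h => hxFj (mem_inter.mpr ⟨h, hxVH⟩)) ?_
  exact mem_cliqueFreeComplex_of_subset (hG.mem_cliqueFreeComplex_iff.mp hFi).1
    (insert_subset hx hsub)

lemma union_sdiff_mem_facets (hG : IsCliqueAttachment G VH S K t)
    (hFi : Fi ∈ Facets (cliqueFreeComplex G t)) (hFj : Fj ∈ Facets (cliqueFreeComplex G t))
    (hS : Fi ∩ S = Fj ∩ S) : Fi ∩ VH ∪ Fj \ VH ∈ Facets (cliqueFreeComplex G t) := by
  refine hG.mem_facets_of_inter_VH_eq hFi ?_ fun v hv => ?_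
  · ext z
    simp only [mem_inter, mem_union, mem_sdiff]
    tauto
  · have hK : (Fi ∩ VH ∪ Fj \ VH) ∩ K v = Fj ∩ K v := by
      ext z
      simp only [mem_inter, mem_union, mem_sdiff]
      by_cases hz : z ∈ VH
      · have := hG.mem_K_iff_of_mem_VH hz hv
        have : z = v → (z ∈ Fi ↔ z ∈ Fj) := by
          rintro rfl
          exact mem_iff_mem_of_inter_eq hS hv
        tauto
      · tauto
    rw [hK]
    exact hG.card_inter_K_add_one_eq hFj hv

lemma exists_sdiff_union_eq_singleton (hG : IsCliqueAttachment G VH S K t)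
    (hT : #(VH \ S) ≤ 3) (hFi : Fi ∈ cliqueFreeComplex G t)
    (hFj : Fj ∈ Facets (cliqueFreeComplex G t)) (hS : Fi ∩ S = Fj ∩ S)
    (hne : Fi ∩ (VH \ S) ≠ Fj ∩ (VH \ S)) (hcard : #(Fj ∩ (VH \ S)) ≤ #(Fi ∩ (VH \ S))) :
    ∃ x ∈ Fj \ Fi, Fj \ (Fi ∩ VH ∪ Fj \ VH) = {x} := by
  have hmemS : ∀ z ∈ S, z ∈ Fi ↔ z ∈ Fj := fun z hz => mem_iff_mem_of_inter_eq hS hz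
  set Ci := Fi ∩ (VH \ S)
  set Cj := Fj ∩ (VH \ S)
  obtain ⟨x, hxCj, hxCi⟩ : ∃ x ∈ Cj, x ∉ Ci := by
    refine not_subset.mp fun hsub => hne ?_
    have hVH : Fj ∩ VH = Fi ∩ VH := hG.inter_VH_eq_of_subset hFi hFj hS fun z hz => ?_
    · ext z
      have := Finset.ext_iff.mp hVH z
      simp only [Ci, Cj, mem_inter, mem_sdiff] at this ⊢
      tauto
    · obtain ⟨hzFj, hzVH⟩ := mem_inter.mp hz
      by_cases hzS : z ∈ S
      · exact mem_inter.mpr ⟨(hmemS z hzS).mpr hzFj, hzVH⟩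
      · have := hsub (mem_inter.mpr ⟨hzFj, mem_sdiff.mpr ⟨hzVH, hzS⟩⟩)
        exact mem_inter.mpr ⟨(mem_inter.mp this).1, hzVH⟩
  -- `Cj \ Ci` is no larger than `Ci \ Cj`, and both lie in the at most three vertices of `VH \ S`.
  have hsingle : Cj \ Ci = {x} := by
    have h1 : #(Cj \ Ci) ≤ #(Ci \ Cj) := card_sdiff_le_card_sdiff_iff.mpr hcard
    have h2 : #(Cj \ Ci) + #(Ci \ Cj) ≤ #(VH \ S) := by
      rw [← card_union_of_disjoint disjoint_sdiff_sdiff]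
      exact card_le_card (union_subset (sdiff_subset.trans inter_subset_right)
        (sdiff_subset.trans inter_subset_right))
    have hx : x ∈ Cj \ Ci := mem_sdiff.mpr ⟨hxCj, hxCi⟩
    exact eq_singleton_iff_unique_mem.mpr ⟨hx, fun z hz => card_le_one.mp (by omega) z hz x hx⟩
  refine ⟨x, ?_, ?_⟩
  · simp only [Ci, Cj, mem_sdiff, mem_inter] at hxCj hxCi ⊢
    tauto
  · rw [← hsingle]
    ext z
    have := hmemS z
    simp only [Ci, Cj, mem_sdiff, mem_inter, mem_union]
    tauto

lemma exists_exchange_of_inter_VH_eq [LinearOrder V] (hG : IsCliqueAttachment G VH S K t)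
    (hFi : Fi ∈ Facets (cliqueFreeComplex G t)) (hFj : Fj ∈ Facets (cliqueFreeComplex G t))
    (hVH : Fi ∩ VH = Fj ∩ VH) (hlt : toColex (Fi \ VH) < toColex (Fj \ VH)) :
    ∃ m ∈ Fj \ Fi, ∃ F' ∈ Facets (cliqueFreeComplex G t), F' ∩ VH = Fj ∩ VH ∧
      toColex (F' \ VH) < toColex (Fj \ VH) ∧ Fj \ F' = {m} := by
  obtain ⟨m, hmj, hmi, hmax⟩ := Colex.toColex_lt_toColex_iff_exists_forall_lt.mp hlt
  obtain ⟨hmFj, hmVH⟩ := mem_sdiff.mp hmj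
  have hmFi : m ∉ Fi := fun h => hmi (mem_sdiff.mpr ⟨h, hmVH⟩)
  obtain ⟨v, hv, hmK⟩ := (hG.cover m).resolve_left hmVH
  obtain ⟨a, haFi, haK, haFj⟩ : ∃ a ∈ Fi, a ∈ K v ∧ a ∉ Fj := by
    by_contra! hsub
    have hK : Fi ∩ K v = Fj ∩ K v := eq_of_subset_of_card_le
      (fun z hz => mem_inter.mpr ⟨hsub z (mem_inter.mp hz).1 (mem_inter.mp hz).2,
        (mem_inter.mp hz).2⟩)
      (by have := hG.card_inter_K_add_one_eq hFi hv
          have := hG.card_inter_K_add_one_eq hFj hv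
          omega)
    exact hmFi (mem_of_mem_inter_left (hK ▸ mem_inter.mpr ⟨hmFj, hmK⟩))
  have haVH : a ∉ VH := fun h => haFj (mem_of_mem_inter_left (hVH ▸ mem_inter.mpr ⟨haFi, h⟩))
  have ham : a < m := hmax a (mem_sdiff.mpr ⟨haFi, haVH⟩) fun h => haFj (mem_sdiff.mp h).1
  have hF'VH : insert a (Fj.erase m) ∩ VH = Fj ∩ VH := by
    rw [insert_inter_of_notMem haVH, erase_inter,
      erase_eq_of_notMem fun h => hmVH (mem_inter.mp h).2]
  refine ⟨m, mem_sdiff.mpr ⟨hmFj, hmFi⟩, insert a (Fj.erase m),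
    hG.mem_facets_of_inter_VH_eq hFj hF'VH fun w hw => ?_, hF'VH, ?_,
    sdiff_insert_erase_eq_singleton hmFj ham.ne⟩
  · rw [hG.card_insert_erase_inter_K hv hw haK haFj (mem_inter.mpr ⟨hmFj, hmK⟩)]
    exact hG.card_inter_K_add_one_eq hFj hw
  · rw [insert_sdiff_of_notMem _ haVH, erase_sdiff_comm]
    conv_rhs => rw [← insert_erase hmj]
    exact (Colex.insert_lt_insert (by simp [haFj]) (notMem_erase m _)).mpr ham

theorem exists_shellingKey_exchange [Finite V] [LinearOrder V]
    (hG : IsCliqueAttachment G VH S K t) (hT : #(VH \ S) ≤ 3)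
    (hFi : Fi ∈ Facets (cliqueFreeComplex G t)) (hFj : Fj ∈ Facets (cliqueFreeComplex G t))
    (hlt : shellingKey VH S Fi < shellingKey VH S Fj) :
    ∃ v ∈ Fj \ Fi, ∃ F' ∈ Facets (cliqueFreeComplex G t),
      shellingKey VH S F' < shellingKey VH S Fj ∧ Fj \ F' = {v} := by
  by_cases hu : ∃ u ∈ Fj ∩ S, u ∉ Fi
  · obtain ⟨u, huS, huFi⟩ := hu
    obtain ⟨huFj, huS⟩ := mem_inter.mp huS
    obtain ⟨F', hF', hdiff, hssub⟩ := hG.exists_mem_facets_sdiff_eq_singleton hFj huFj huS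
    exact ⟨u, mem_sdiff.mpr ⟨huFj, huFi⟩, F', hF',
      Prod.Lex.toLex_lt_toLex.mpr (Or.inl (cardColex_lt_of_ssubset hssub)), hdiff⟩
  push Not at hu
  have hS : Fi ∩ S = Fj ∩ S :=
    (eq_of_subset_of_card_le (fun z hz => mem_inter.mpr ⟨hu z hz, (mem_inter.mp hz).2⟩)
      (card_le_of_cardColex_le (Prod.Lex.toLex_le_toLex'.mp hlt.le).1)).symm
  rw [shellingKey, shellingKey, hS, Prod.Lex.toLex_lt_toLex] at hlt
  replace hlt := Prod.Lex.toLex_lt_toLex.mp (hlt.resolve_left (lt_irrefl _)).2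
  by_cases hC : Fi ∩ (VH \ S) = Fj ∩ (VH \ S)
  · have hVH : Fi ∩ VH = Fj ∩ VH := by
      rw [hG.inter_VH_eq_union, hG.inter_VH_eq_union, hS, hC]
    rw [hC] at hlt
    replace hlt := (hlt.resolve_left (lt_irrefl _)).2
    obtain ⟨m, hm, F', hF', hF'VH, hP, hdiff⟩ := hG.exists_exchange_of_inter_VH_eq hFi hFj hVH hlt
    refine ⟨m, hm, F', hF', ?_, hdiff⟩
    simp only [shellingKey, inter_eq_inter_of_subset hF'VH hG.subset,
      inter_eq_inter_of_subset hF'VH sdiff_subset, Prod.Lex.toLex_lt_toLex, lt_self_iff_false,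
      true_and, false_or, hP]
  · have hlt' := hlt.resolve_right fun h => hC (cardColex_injective (toDual_inj.mp h.1))
    obtain ⟨x, hx, hdiff⟩ := hG.exists_sdiff_union_eq_singleton hT hFi.1 hFj hS hC
      (card_le_of_cardColex_le (toDual_lt_toDual.mp hlt').le)
    refine ⟨x, hx, _, hG.union_sdiff_mem_facets hFi hFj hS, ?_, hdiff⟩
    have hVH : (Fi ∩ VH ∪ Fj \ VH) ∩ VH = Fi ∩ VH := by
      ext z
      simp only [mem_inter, mem_union, mem_sdiff]
      tauto
    simp only [shellingKey, inter_eq_inter_of_subset hVH hG.subset, hS,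
      inter_eq_inter_of_subset hVH sdiff_subset, Prod.Lex.toLex_lt_toLex, lt_self_iff_false,
      true_and, false_or, hlt', true_or]

theorem isShellable_cliqueFreeComplex [Finite V] [LinearOrder V]
    (hG : IsCliqueAttachment G VH S K t) (hT : #(VH \ S) ≤ 3) :
    IsShellable (cliqueFreeComplex G t) :=
  isShellable_of_exists_exchange (Set.toFinite _) (shellingKey VH S)
    (shellingKey_injective VH S).injOn fun _ hFi _ hFj h =>
      hG.exists_shellingKey_exchange hT hFi hFj h

end IsCliqueAttachment

theorem statement10_general {V : Type*} [Fintype V] [DecidableEq V]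
    (t : ℕ) (G : SimpleGraph V) (VH S : Finset V) (K : V → Finset V)
    (hG : IsCliqueAttachment G VH S K t)
    (hS : VH.card - 3 ≤ S.card) :
    IsShellable (cliqueFreeComplex G t) := by
  have hT : #(VH \ S) ≤ 3 := by
    rw [card_sdiff_of_subset hG.subset]
    omega
  -- This order carries its own `DecidableEq V`; `convert` identifies it with the given one.
  let : LinearOrder V := LinearOrder.lift' (Fintype.equivFin V) (Fintype.equivFin V).injective
  convert (show IsCliqueAttachment G VH S K t by convert hG).isShellable_cliqueFreeComplex
    (by convert hT)

/-- for `G = Cl(H, S, t)` with `|S| ≥ |V(H)| - 3`, the complex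
`CF_t(G)` is shellable. -/
theorem statement10 {V : Type*} [Fintype V] [DecidableEq V]
    (t : ℕ) (ht : 2 ≤ t) (G : SimpleGraph V) (VH S : Finset V) (K : V → Finset V)
    (hG : IsCliqueAttachment G VH S K t)
    (hS : VH.card - 3 ≤ S.card) :
    IsShellable (cliqueFreeComplex G t) :=
  statement10_general t G VH S K hG hS
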